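/- arXiv:2509.01887 — 2 statements merged into one kernel-verified Lean document; each statement's English description precedes it below -/
import Mathlib

section
/- Let G = (V, D, B) be a DMG, let r ∈ {d, σ}, let I ⊆ V and let X ∈ I. Then for every Y ∈ V ∖ {X}: Y is a descendant of X in the intervened graph G_Ī if and only if the empty set does not r-separate X and Y in G_Ī. -/
universe u

/-- A directed mixed graph (DMG): directed edges `D` (no self-loops) and
bidirected edges `B` (symmetric, no self-loops). -/
structure DMG (V : Type u) where
  D : V → V → Prop
  B : V → V → Prop
  D_irrefl : ∀ x, ¬ D x x
  B_symm : ∀ x y, B x y → B y x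
  B_irrefl : ∀ x, ¬ B x x

namespace DMG

variable {V : Type u}

/-- `x` is an ancestor of `y` (reflexive-transitive closure of `D`). -/
def anc (G : DMG V) (x y : V) : Prop := Relation.ReflTransGen G.D x y

/-- ancestors of a set of vertices -/
def ancSet (G : DMG V) (W : Set V) : Set V := {x | ∃ y ∈ W, G.anc x y}

/-- the strongly connected component of `x` -/
def scc (G : DMG V) (x : V) : Set V := {y | G.anc x y ∧ G.anc y x}

/-- parents of a vertex -/
def pa (G : DMG V) (x : V) : Set V := {y | G.D y x}

/-- parents of a set of vertices -/
def paSet (G : DMG V) (W : Set V) : Set V := {y | ∃ x ∈ W, G.D y x}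

/-- non-adjacent bidirected edges -/
def BN (G : DMG V) : V → V → Prop := fun x y => G.B x y ∧ ¬ G.D x y ∧ ¬ G.D y x

/-- the intervened graph `G_Ī` -/
def intervene (G : DMG V) (I : Set V) : DMG V where
  D a b := G.D a b ∧ b ∉ I
  B a b := G.B a b ∧ a ∉ I ∧ b ∉ I
  D_irrefl := fun x h => G.D_irrefl x h.1
  B_symm := fun x y h => ⟨G.B_symm x y h.1, h.2.2, h.2.1⟩
  B_irrefl := fun x h => G.B_irrefl x h.1

/-- the directed skeleton `G^u` -/
def skel (G : DMG V) : SimpleGraph V where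
  Adj x y := x ≠ y ∧ (G.D x y ∨ G.D y x)
  symm := ⟨fun _ _ h => ⟨h.1.symm, h.2.elim Or.inr Or.inl⟩⟩
  loopless := ⟨fun _ h => h.1 rfl⟩

/-- the undirected component graph `G^{uc}` -/
def ucomp (G : DMG V) : SimpleGraph V where
  Adj x y := x ≠ y ∧ ¬ G.D x y ∧ ¬ G.D y x
  symm := ⟨fun _ _ h => ⟨h.1.symm, h.2.2, h.2.1⟩⟩
  loopless := ⟨fun _ h => h.1 rfl⟩

/-- `S` is an SCC of `G` -/
def isSCC (G : DMG V) (S : Set V) : Prop := ∃ x, S = G.scc x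

/-- `S` is an SCC-ancestor of the distinct SCC `S'` -/
def sccAncestor (G : DMG V) (S S' : Set V) : Prop :=
  S ≠ S' ∧ ∃ x ∈ S, ∃ y ∈ S', G.anc x y

/-- `S` is a `k`-order SCC-ancestor of `S'`: there is a directed path from a
vertex of `S` to a vertex of `S'` passing through at most `k-1` SCCs other than
`S` and `S'`. -/
def kOrderSCCAnc (G : DMG V) (k : ℕ) (S S' : Set V) : Prop :=
  S ≠ S' ∧ ∃ p : List V, p ≠ [] ∧ p.Chain' G.D ∧
    (∃ x ∈ S, p.head? = some x) ∧ (∃ y ∈ S', p.getLast? = some y) ∧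
    ({C : Set V | ∃ z ∈ p, z ∉ S ∧ z ∉ S' ∧ C = G.scc z}).ncard ≤ k - 1

/-- `G` has SCC-Anc length `l` : `l` is the least integer such that every
SCC-ancestor of any SCC is an `l`-order SCC-ancestor. -/
def sccAncLength (G : DMG V) (l : ℕ) : Prop :=
  IsLeast {m | ∀ S S' : Set V, G.isSCC S → G.isSCC S' →
    G.sccAncestor S' S → G.kOrderSCCAnc m S' S} l

/-- membership in the first layer `𝒯_1` of the SCC-Anc partition -/
def sccLayer0 (G : DMG V) (S : Set V) : Prop :=
  G.isSCC S ∧ ¬ ∃ S' : Set V, G.isSCC S' ∧ G.sccAncestor S' S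

/-- `m` is the least order at which `S'` is an SCC-ancestor of `S` -/
def minOrd (G : DMG V) (S' S : Set V) (m : ℕ) : Prop :=
  IsLeast {j | G.kOrderSCCAnc j S' S} m

/-- membership in the layer `𝒯_{i+1}` of the SCC-Anc partition (0-indexed `i`):
for `i ≥ 1`, `S ∈ 𝒯_{i+1}` iff some SCC of `𝒯_1` is an `i`-order SCC-ancestor
of `S` and no SCC of `𝒯_1` is only an `r`-order SCC-ancestor of `S` for `r > i`,
i.e. `i` is the largest minimal order of a `𝒯_1` SCC-ancestor of `S`. -/
def sccLayer (G : DMG V) (i : ℕ) (S : Set V) : Prop :=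
  if i = 0 then G.sccLayer0 S
  else G.isSCC S ∧ IsGreatest {m | ∃ S' : Set V, G.sccLayer0 S' ∧ G.minOrd S' S m} i

/-- `T_{k+1}` (0-indexed `k`): the set of vertices in layers `𝒯_1, …, 𝒯_k` -/
def TUnion (G : DMG V) (k : ℕ) : Set V :=
  {v | ∃ i < k, ∃ S : Set V, G.sccLayer i S ∧ v ∈ S}

/-- SCC-Anc separating system on `(V, 𝕋^G)` (layers 0-indexed by `0,…,l`) -/
def SCCAncSepSystem (G : DMG V) (l : ℕ) (𝓘 : Set (Set V)) : Prop :=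
  ∀ k ≤ l, ∀ S : Set V, G.sccLayer k S → ∀ X ∈ S,
    ∃ I ∈ 𝓘, (G.TUnion k ∪ S) \ {X} ⊆ I ∧ X ∉ I

/-- `G` with the directed edge `(F, S)` removed -/
def removeDir (G : DMG V) (F S : V) : DMG V where
  D a b := G.D a b ∧ ¬(a = F ∧ b = S)
  B := G.B
  D_irrefl := fun x h => G.D_irrefl x h.1
  B_symm := G.B_symm
  B_irrefl := fun x h => G.B_irrefl x h

/-- `G` with the bidirected edge `{S, R}` removed -/
def removeBi (G : DMG V) (S R : V) : DMG V where
  D := G.D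
  B a b := G.B a b ∧ ¬((a = S ∧ b = R) ∨ (a = R ∧ b = S))
  D_irrefl := G.D_irrefl
  B_symm := by
    intro x y h
    refine ⟨G.B_symm x y h.1, ?_⟩
    rintro (⟨h1, h2⟩ | ⟨h1, h2⟩)
    · exact h.2 (Or.inr ⟨h2, h1⟩)
    · exact h.2 (Or.inl ⟨h2, h1⟩)
  B_irrefl := fun x h => G.B_irrefl x h.1

end DMG

/-- kinds of edges along a mixed path: forward directed, backward directed, bidirected -/
inductive EKind | fwd | bwd | bi

/-- a mixed path skeleton: `k ≥ 1` steps, vertices `Z 0, …, Z k`, edges `E 0, …, E (k-1)`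
(step `i` joins `Z i` and `Z (i+1)`). -/
structure MPath (V : Type u) where
  k : ℕ
  Z : ℕ → V
  E : ℕ → EKind
  hk : 1 ≤ k

namespace MPath

variable {V : Type u}

/-- the path is a path of `G` -/
def valid (p : MPath V) (G : DMG V) : Prop :=
  ∀ i < p.k,
    (p.E i = EKind.fwd → G.D (p.Z i) (p.Z (i+1))) ∧
    (p.E i = EKind.bwd → G.D (p.Z (i+1)) (p.Z i)) ∧
    (p.E i = EKind.bi → G.B (p.Z i) (p.Z (i+1)))

/-- the step has an arrowhead at its second endpoint -/
def headAtSnd : EKind → Prop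
  | EKind.fwd => True
  | EKind.bi => True
  | EKind.bwd => False

/-- the step has an arrowhead at its first endpoint -/
def headAtFst : EKind → Prop
  | EKind.bwd => True
  | EKind.bi => True
  | EKind.fwd => False

/-- `Z i` is a collider on the path (meaningful for `1 ≤ i ≤ k-1`) -/
def collider (p : MPath V) (i : ℕ) : Prop :=
  headAtSnd (p.E (i-1)) ∧ headAtFst (p.E i)

end MPath

/-- the separation rule: `d`-separation or `σ`-separation -/
inductive SepRule | d | s

/-- the path between `x` and `y` is `r`-blocked by `S` in `G` -/
def MPath.blocked {V : Type u} (p : MPath V) (G : DMG V) (r : SepRule) (S : Set V)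
    (x y : V) : Prop :=
  ∃ i, 1 ≤ i ∧ i < p.k ∧
    ((p.collider i ∧ p.Z i ∉ G.ancSet (S ∪ {x, y})) ∨
     (¬ p.collider i ∧ p.Z i ∈ S ∧
       (r = SepRule.d ∨
        (p.E i = EKind.fwd ∧ p.Z (i+1) ∉ G.scc (p.Z i)) ∨
        (p.E (i-1) = EKind.bwd ∧ p.Z (i-1) ∉ G.scc (p.Z i)))))

/-- `S` `r`-separates `x` and `y` in `G` -/
def rSep {V : Type u} (G : DMG V) (r : SepRule) (S : Set V) (x y : V) : Prop :=
  ∀ p : MPath V, p.valid G → p.Z 0 = x → p.Z p.k = y → p.blocked G r S x y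

/-- the `r`-independence model of `G` -/
def IM {V : Type u} (G : DMG V) (r : SepRule) : Set (V × V × Set V) :=
  {t | t.1 ≠ t.2.1 ∧ t.1 ∉ t.2.2 ∧ t.2.1 ∉ t.2.2 ∧ rSep G r t.2.2 t.1 t.2.1}

/-- `G` and `H` are `𝓘`-`r`-Markov equivalent -/
def IMEquiv {V : Type u} (G H : DMG V) (r : SepRule) (𝓘 : Set (Set V)) : Prop :=
  ∀ I ∈ 𝓘, IM (G.intervene I) r = IM (H.intervene I) r

/-- a `d`-inducing path between `x` and `y`: every collider is an ancestor of `{x,y}` -/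
def MPath.dInducing {V : Type u} (p : MPath V) (G : DMG V) (x y : V) : Prop :=
  ∀ i, 1 ≤ i → i < p.k → p.collider i → p.Z i ∈ G.ancSet {x, y}

/-- a `σ`-inducing path between `x` and `y` -/
def MPath.sInducing {V : Type u} (p : MPath V) (G : DMG V) (x y : V) : Prop :=
  p.dInducing G x y ∧
  ∀ i, 1 ≤ i → i < p.k → ¬ p.collider i →
    (p.E (i-1) = EKind.bwd → p.Z (i-1) ∈ G.scc (p.Z i)) ∧
    (p.E i = EKind.fwd → p.Z (i+1) ∈ G.scc (p.Z i))

/-- an `r`-inducing path -/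
def MPath.rInducing {V : Type u} (p : MPath V) (G : DMG V) (r : SepRule) (x y : V) : Prop :=
  match r with
  | SepRule.d => p.dInducing G x y
  | SepRule.s => p.sInducing G x y

/-- colored separating system on `(V, C)` -/
def ColoredSepSystem {V : Type u} {γ : Type*} (C : V → γ) (𝓘 : Set (Set V)) : Prop :=
  ∀ X Y : V, C X ≠ C Y → ∃ I ∈ 𝓘, X ∈ I ∧ Y ∉ I

/-- non-adjacent separating system on `(V, D)` -/
def NonAdjSepSystem {V : Type u} (G : DMG V) (𝓘 : Set (Set V)) : Prop :=
  ∀ X Y : V, X ≠ Y → ¬ G.D X Y → ¬ G.D Y X →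
    ∃ I ∈ 𝓘, G.paSet {X, Y} ⊆ I ∧ X ∉ I ∧ Y ∉ I

/-- adjacent separating system on `(V, D)` -/
def AdjSepSystem {V : Type u} (G : DMG V) (𝓘 : Set (Set V)) : Prop :=
  ∀ X Y : V, G.D X Y → ¬ G.D Y X →
    (∃ I ∈ 𝓘, G.paSet {X, Y} \ {X, Y} ⊆ I ∧ X ∉ I ∧ Y ∉ I) ∧
    (∃ I' ∈ 𝓘, G.paSet {X, Y} \ {Y} ⊆ I' ∧ X ∈ I' ∧ Y ∉ I')

/-- the minimum edge clique cover number `cc(H)` -/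
noncomputable def ecc {V : Type u} (H : SimpleGraph V) : ℕ :=
  sInf {K | ∃ C : Fin K → Set V, (∀ k, H.IsClique (C k)) ∧
    ∀ x y : V, H.Adj x y → ∃ k, x ∈ C k ∧ y ∈ C k}

/-- two edges that must receive different colors in a strong edge coloring:
they are distinct and share an endpoint or are both incident to a common third edge -/
def StrongAdjE {V : Type u} (H : SimpleGraph V) (e₁ e₂ : Sym2 V) : Prop :=
  e₁ ≠ e₂ ∧ ((∃ v, v ∈ e₁ ∧ v ∈ e₂) ∨
    ∃ e₃ ∈ H.edgeSet, e₃ ≠ e₁ ∧ e₃ ≠ e₂ ∧ (∃ v, v ∈ e₁ ∧ v ∈ e₃) ∧ ∃ u, u ∈ e₂ ∧ u ∈ e₃)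

/-- the strong edge chromatic number `χ_s(H)` -/
noncomputable def strongChrom {V : Type u} (H : SimpleGraph V) : ℕ :=
  sInf {K | ∃ f : Sym2 V → Fin K, ∀ e₁ ∈ H.edgeSet, ∀ e₂ ∈ H.edgeSet,
    StrongAdjE H e₁ e₂ → f e₁ ≠ f e₂}

/-! Along an unblocked path out of `X`, follow the edges while they point away from `X`. Since
`X` receives no arrowhead in `G_Ī`, the first edge does; if some later edge points back, the
vertex where the direction turns is a collider, hence an ancestor of `X` or `Y`. It cannot be an
ancestor of `X`, which has no parents, so it is an ancestor of `Y`, and so is `X`. Conversely a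
directed path from `X` to `Y` has neither colliders nor conditioned vertices. -/

namespace DMG

variable {V : Type u}

theorem exists_walk_of_anc {G : DMG V} {x y : V} (h : G.anc x y) :
    ∃ k, ∃ z : ℕ → V, z 0 = x ∧ z k = y ∧ ∀ i < k, G.D (z i) (z (i + 1)) := by
  induction h with
  | refl => exact ⟨0, fun _ => x, rfl, rfl, fun i hi => absurd hi (Nat.not_lt_zero i)⟩
  | @tail b c _ hbc ih =>
    obtain ⟨k, z, hz0, hzk, hstep⟩ := ih
    refine ⟨k + 1, fun i => if i ≤ k then z i else c, by simpa using hz0, by simp, ?_⟩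
    intro i hi
    rcases Nat.lt_succ_iff_lt_or_eq.mp hi with hik | rfl
    · simpa [hik.le, Nat.succ_le_of_lt hik] using hstep i hik
    · simpa [hzk] using hbc

theorem exists_fwd_path_of_anc {G : DMG V} {x y : V} (h : G.anc x y) (hxy : x ≠ y) :
    ∃ p : MPath V, p.valid G ∧ p.Z 0 = x ∧ p.Z p.k = y ∧ ∀ i, p.E i = EKind.fwd := by
  obtain ⟨k, z, hz0, hzk, hstep⟩ := exists_walk_of_anc h
  have hk : 1 ≤ k := Nat.one_le_iff_ne_zero.mpr fun hk0 => hxy (hz0 ▸ hk0 ▸ hzk)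
  refine ⟨⟨k, z, fun _ => EKind.fwd, hk⟩, fun i hi => ⟨fun _ => hstep i hi, nofun, nofun⟩,
    hz0, hzk, fun _ => rfl⟩

theorem eq_of_anc_of_forall_not_D {G : DMG V} {x y : V} (hy : ∀ z, ¬ G.D z y)
    (h : G.anc x y) : x = y := by
  rcases Relation.ReflTransGen.cases_tail h with hxy | ⟨c, -, hcy⟩
  · exact hxy.symm
  · exact absurd hcy (hy c)

end DMG

namespace MPath

variable {V : Type u}

theorem headAtFst_of_ne_fwd {e : EKind} (he : e ≠ EKind.fwd) : headAtFst e := by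
  cases e <;> simp_all [headAtFst]

theorem anc_of_forall_lt_fwd {G : DMG V} {p : MPath V} (hp : p.valid G) :
    ∀ {j}, j ≤ p.k → (∀ i < j, p.E i = EKind.fwd) → G.anc (p.Z 0) (p.Z j)
  | 0, _, _ => Relation.ReflTransGen.refl
  | j + 1, hj, hfwd =>
    (anc_of_forall_lt_fwd hp (by omega) fun i hi => hfwd i (by omega)).tail
      ((hp j (by omega)).1 (hfwd j (by omega)))

theorem not_blocked_empty_of_forall_fwd {G : DMG V} {r : SepRule} {p : MPath V} {x y : V}
    (hfwd : ∀ i, p.E i = EKind.fwd) : ¬ p.blocked G r ∅ x y := by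
  rintro ⟨i, -, -, ⟨⟨-, hhead⟩, -⟩ | ⟨-, hmem, -⟩⟩
  · simp [hfwd i, headAtFst] at hhead
  · exact hmem

theorem anc_of_not_blocked_empty {G : DMG V} {r : SepRule} {p : MPath V} {x : V}
    (hp : p.valid G) (hD : ∀ z, ¬ G.D z x) (hB : ∀ z, ¬ G.B x z) (h0 : p.Z 0 = x)
    (hnb : ¬ p.blocked G r ∅ x (p.Z p.k)) : G.anc x (p.Z p.k) := by
  subst h0
  by_cases hall : ∀ i < p.k, p.E i = EKind.fwd
  · exact anc_of_forall_lt_fwd hp le_rfl hall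
  push Not at hall
  classical
  set j := Nat.find hall
  obtain ⟨hjk, hj⟩ : j < p.k ∧ p.E j ≠ EKind.fwd := Nat.find_spec hall
  have hbefore : ∀ i < j, p.E i = EKind.fwd := fun i hi => by
    by_contra hne
    exact Nat.find_min hall hi ⟨by omega, hne⟩
  have hanc : G.anc (p.Z 0) (p.Z j) := anc_of_forall_lt_fwd hp hjk.le hbefore
  have hj1 : 1 ≤ j := by
    refine Nat.one_le_iff_ne_zero.mpr fun hj0 => ?_
    obtain ⟨-, hbwd, hbi⟩ := hp 0 (by omega)
    cases he : p.E 0 with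
    | fwd => exact hj (hj0 ▸ he)
    | bwd => exact hD _ (hbwd he)
    | bi => exact hB _ (hbi he)
  have hprev : p.E (j - 1) = EKind.fwd := hbefore _ (by omega)
  have hcoll : p.collider j := ⟨by simp [hprev, headAtSnd], headAtFst_of_ne_fwd hj⟩
  have hmem : p.Z j ∈ G.ancSet (∅ ∪ {p.Z 0, p.Z p.k}) := by
    by_contra hnot
    exact hnb ⟨j, hj1, hjk, Or.inl ⟨hcoll, hnot⟩⟩
  obtain ⟨w, hw, hjw⟩ := hmem
  rcases (by simpa using hw : w = p.Z 0 ∨ w = p.Z p.k) with rfl | rfl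
  · have hjx : p.Z j = p.Z 0 := G.eq_of_anc_of_forall_not_D hD hjw
    have hedge := (hp (j - 1) (by omega)).1 hprev
    rw [Nat.sub_add_cancel hj1, hjx] at hedge
    exact absurd hedge (hD _)
  · exact hanc.trans hjw

end MPath

theorem descendant_iff_dependent_after_intervention_general {V : Type u}
    (G : DMG V) (r : SepRule) (I : Set V) (X : V) (hX : X ∈ I) (Y : V) (hXY : Y ≠ X) :
    (G.intervene I).anc X Y ↔ ¬ rSep (G.intervene I) r ∅ X Y := by
  constructor
  · intro hanc hsep
    obtain ⟨p, hp, h0, hk, hfwd⟩ := DMG.exists_fwd_path_of_anc hanc hXY.symm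
    exact MPath.not_blocked_empty_of_forall_fwd hfwd (hsep p hp h0 hk)
  · intro hdep
    obtain ⟨p, hp, h0, rfl, hnb⟩ : ∃ p : MPath V, p.valid (G.intervene I) ∧ p.Z 0 = X ∧
        p.Z p.k = Y ∧ ¬ p.blocked (G.intervene I) r ∅ X Y := by
      simpa [rSep] using hdep
    exact MPath.anc_of_not_blocked_empty hp (fun _ h => h.2 hX) (fun _ h => h.2.1 hX) h0 hnb

/-- after intervening on `I ∋ X`, `Y` is a descendant of `X` in the
intervened graph iff the empty set does not `r`-separate `X` and `Y` there. -/
theorem descendant_iff_dependent_after_intervention {V : Type u} [Fintype V]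
    (G : DMG V) (r : SepRule) (I : Set V) (X : V) (hX : X ∈ I) (Y : V) (hXY : Y ≠ X) :
    (G.intervene I).anc X Y ↔ ¬ rSep (G.intervene I) r ∅ X Y :=
  descendant_iff_dependent_after_intervention_general G r I X hX Y hXY
end

section
/- Let G = (V, D, B) be a DMG, let r ∈ {d, σ}, and let X, Y be distinct vertices with (X,Y) ∉ D and (Y,X) ∉ D. Let I ⊆ V satisfy Pa_G({X,Y}) ⊆ I, X ∉ I and Y ∉ I. Then {X,Y} ∈ B if and only if Pa_G({X,Y}) does not r-separate X and Y in the intervened graph G_Ī. -/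
universe u

/-! Intervening on `I` deletes every edge with an arrowhead at a vertex of `I`, so a vertex of `I`
is an ancestor only of itself, and once `I ⊇ Pa_G({X,Y})` every ancestor of `Pa_G({X,Y}) ∪ {X,Y}`
in `G_Ī` lies in `I ∪ {X,Y}`. Take a path from `X` to `Y` in `G_Ī` other than the edge `X ↔ Y`.
If it starts `X ← Z₁`, then `Z₁ ∈ Pa_G(X) ⊆ I` is a blocking non-collider, its edge to `X` leaving
its strongly connected component. Otherwise it enters `Z₁ ∉ I ∪ {X,Y}` through an arrowhead, and
so does every later vertex: such a vertex is a blocking collider unless the path continues with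
`Z → Z'`, and then `Z' ∉ I` and `Z'` is not `X` or `Y`, whose parents lie in `I`. So the path
never reaches `Y`. -/

namespace DMG

variable {V : Type u} {G : DMG V} {I : Set V}

theorem eq_of_anc_intervene_of_mem {z t : V} (h : (G.intervene I).anc z t) (ht : t ∈ I) :
    z = t := by
  induction h with
  | refl => rfl
  | tail _ hD _ => exact absurd ht hD.2

theorem mem_or_mem_of_mem_ancSet_intervene {W : Set V} (hW : G.paSet W ⊆ I) {z : V}
    (hz : z ∈ (G.intervene I).ancSet (G.paSet W ∪ W)) : z ∈ I ∨ z ∈ W := by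
  obtain ⟨t, ht | ht, hzt⟩ := hz
  · exact .inl (eq_of_anc_intervene_of_mem hzt (hW ht) ▸ hW ht)
  · rcases Relation.ReflTransGen.cases_tail hzt with rfl | ⟨w, hzw, hwt⟩
    · exact .inr ht
    · have hwI : w ∈ I := hW ⟨t, ht, hwt.1⟩
      exact .inl (eq_of_anc_intervene_of_mem hzw hwI ▸ hwI)

end DMG

namespace MPath

variable {V : Type u} {G : DMG V} {I : Set V} {p : MPath V}

theorem headAtFst_or_eq_fwd (e : EKind) : headAtFst e ∨ e = EKind.fwd := by
  cases e <;> simp [headAtFst]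

def edge (x y : V) (e : EKind) : MPath V :=
  ⟨1, fun i => if i = 0 then x else y, fun _ => e, le_rfl⟩

theorem not_blocked_edge (x y : V) (e : EKind) (G : DMG V) (r : SepRule) (S : Set V)
    (x' y' : V) : ¬ (edge x y e).blocked G r S x' y' := by
  rintro ⟨i, hi1, hik, -⟩
  have : i < 1 := hik
  omega

theorem valid_edge_bi {x y : V} (h : G.B x y) : (edge x y .bi).valid G := by
  intro i hi
  obtain rfl : i = 0 := Nat.lt_one_iff.mp hi
  exact ⟨nofun, nofun, fun _ => h⟩

theorem Z_succ_not_mem_of_headAtSnd (hp : p.valid (G.intervene I)) {j : ℕ} (hj : j < p.k)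
    (h : headAtSnd (p.E j)) : p.Z (j + 1) ∉ I := by
  cases hE : p.E j
  · exact ((hp j hj).1 hE).2
  · rw [hE] at h; exact h.elim
  · exact ((hp j hj).2.2 hE).2.2

section Unblocked

variable {r : SepRule} {x y : V} (hI : G.paSet {x, y} ⊆ I) (hp : p.valid (G.intervene I))
  (hnb : ¬ p.blocked (G.intervene I) r (G.paSet {x, y}) x y) (hy : p.Z p.k = y)
include hI hp hnb hy

theorem headAtSnd_succ {j : ℕ} (hj : j < p.k) (hhead : headAtSnd (p.E j))
    (hxy : p.Z (j + 1) ∉ ({x, y} : Set V)) :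
    j + 1 < p.k ∧ headAtSnd (p.E (j + 1)) ∧ p.Z (j + 2) ∉ ({x, y} : Set V) := by
  have hjk : j + 1 < p.k := by
    refine lt_of_le_of_ne hj fun he => hxy ?_
    simp [he, hy]
  have hZI := Z_succ_not_mem_of_headAtSnd hp hj hhead
  rcases headAtFst_or_eq_fwd (p.E (j + 1)) with hfst | hfwd
  · refine absurd ⟨j + 1, by omega, hjk, .inl ⟨⟨hhead, hfst⟩, fun hanc => ?_⟩⟩ hnb
    rcases DMG.mem_or_mem_of_mem_ancSet_intervene hI hanc with h | h
    exacts [hZI h, hxy h]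
  · have hD := ((hp (j + 1) hjk).1 hfwd).1
    exact ⟨hjk, by simp [hfwd, headAtSnd], fun h => hZI (hI ⟨_, h, hD⟩)⟩

theorem Z_one_mem_of_headAtSnd_zero (hhead : headAtSnd (p.E 0)) :
    p.Z 1 ∈ ({x, y} : Set V) := by
  by_contra hxy
  have key : ∀ n, n < p.k ∧ headAtSnd (p.E n) ∧ p.Z (n + 1) ∉ ({x, y} : Set V) := by
    intro n
    induction n with
    | zero => exact ⟨p.hk, hhead, hxy⟩
    | succ n ih => exact headAtSnd_succ hI hp hnb hy ih.1 ih.2.1 ih.2.2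
  exact lt_irrefl _ (key p.k).1

end Unblocked

theorem blocked_of_not_B {r : SepRule} {x y : V} (hI : G.paSet {x, y} ⊆ I) (hx : x ∉ I)
    (hy : y ∉ I) (hB : ¬ G.B x y) (hp : p.valid (G.intervene I)) (h0 : p.Z 0 = x)
    (hk : p.Z p.k = y) : p.blocked (G.intervene I) r (G.paSet {x, y}) x y := by
  by_contra hnb
  have hk0 : 0 < p.k := p.hk
  cases hE : p.E 0
  · have hD : G.D x (p.Z 1) := h0 ▸ ((hp 0 hk0).1 hE).1
    have h1 := Z_one_mem_of_headAtSnd_zero hI hp hnb hk (by simp [hE, headAtSnd])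
    exact hx (hI ⟨_, h1, hD⟩)
  · have hZ1 : p.Z 1 ∈ G.paSet {x, y} := ⟨x, .inl rfl, h0 ▸ ((hp 0 hk0).2.1 hE).1⟩
    have hk1 : 1 < p.k := lt_of_le_of_ne p.hk fun he => hy (hk ▸ he ▸ hI hZ1)
    refine hnb ⟨1, le_rfl, hk1, .inr ⟨by simp [collider, hE, headAtSnd], hZ1, .inr (.inr ⟨hE, ?_⟩)⟩⟩
    exact fun hscc => hx (h0 ▸ DMG.eq_of_anc_intervene_of_mem hscc.2 (hI hZ1) ▸ hI hZ1)
  · have hB' : G.B x (p.Z 1) := h0 ▸ ((hp 0 hk0).2.2 hE).1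
    rcases Z_one_mem_of_headAtSnd_zero hI hp hnb hk (by simp [hE, headAtSnd]) with h | h
    · exact G.B_irrefl x (h ▸ hB')
    · exact hB (h ▸ hB')

end MPath

theorem not_rSep_of_B {V : Type u} {G : DMG V} {x y : V} (h : G.B x y) (r : SepRule)
    (S : Set V) : ¬ rSep G r S x y := fun hsep =>
  MPath.not_blocked_edge x y .bi G r S x y <| hsep _ (MPath.valid_edge_bi h) rfl rfl

theorem bidirected_iff_dependent_after_intervention_general {V : Type u}
    (G : DMG V) (r : SepRule) (X Y : V)
    (I : Set V) (hI1 : G.paSet {X, Y} ⊆ I) (hI2 : X ∉ I) (hI3 : Y ∉ I) :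
    G.B X Y ↔ ¬ rSep (G.intervene I) r (G.paSet {X, Y}) X Y := by
  refine ⟨fun hB => not_rSep_of_B (G := G.intervene I) ⟨hB, hI2, hI3⟩ r _, fun hdep => ?_⟩
  by_contra hB
  exact hdep fun p hp h0 hk => MPath.blocked_of_not_B hI1 hI2 hI3 hB hp h0 hk

/-- for non-adjacent `X, Y`, after intervening on all their parents,
`{X,Y}` is a bidirected edge iff `Pa_G({X,Y})` does not `r`-separate `X` and `Y` in
the intervened graph. -/
theorem bidirected_iff_dependent_after_intervention {V : Type u} [Fintype V]
    (G : DMG V) (r : SepRule) (X Y : V) (hXY : X ≠ Y)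
    (hD1 : ¬ G.D X Y) (hD2 : ¬ G.D Y X)
    (I : Set V) (hI1 : G.paSet {X, Y} ⊆ I) (hI2 : X ∉ I) (hI3 : Y ∉ I) :
    G.B X Y ↔ ¬ rSep (G.intervene I) r (G.paSet {X, Y}) X Y :=
  bidirected_iff_dependent_after_intervention_general G r X Y I hI1 hI2 hI3
end
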